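/- arXiv:1305.4906 — 2 statements merged into one kernel-verified Lean document; each statement's English description precedes it below -/
import Mathlib

section
/- Let k be a field of characteristic ≠ 2 and let F ∈ k[X] be a monic ε-symmetric polynomial (ε = ±1). Then F is a product of monic polynomials of type 0, of type 1 and of type 2. -/
/-!
Since `F(0) = ε` and `ε² = 1`, the polynomial `F` equals its dual `F*`, and `f ↦ f*` is
multiplicative and involutive on monic polynomials with nonzero constant term. Take a monic
irreducible factor `g` of `F`. If `g* = g`, then `g(0) = ±1` and `X^{deg g} g(1/X) = g(0) g`;
evaluating at `-g(0)` shows that, unless `g(0) = 1` and `deg g` is even, `g` has the root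
`-g(0)` (this is where `2 ≠ 0` enters), so `g = X ± 1`. If `g* ≠ g`, then `g*` is a second
irreducible factor of `F* = F`, coprime to `g`, so `g g*` divides `F`. In both cases the
cofactor is again self-dual, and induction on the degree finishes the proof.
-/

open Polynomial

noncomputable section

variable {k : Type} [Field k]

/-- `f*(X) = f(0)⁻¹ X^{deg f} f(1/X)`. -/
def starPoly (f : k[X]) : k[X] := Polynomial.C (f.coeff 0)⁻¹ * f.reverse

/-- Type 0 : a product of powers of `X - 1` and `X + 1`. -/
def IsType0Pol (f : k[X]) : Prop := ∃ a b : ℕ, f = (X - 1 : k[X]) ^ a * (X + 1) ^ b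

/-- Type 1 : a product of (powers of) monic symmetric irreducible polynomials of even degree. -/
def IsType1Pol (f : k[X]) : Prop :=
  ∃ s : Multiset k[X],
    (∀ g ∈ s, g.Monic ∧ Irreducible g ∧ g = g.reverse ∧ Even g.natDegree) ∧ f = s.prod

/-- Type 2 : a product of polynomials `g * g*` with `g` monic irreducible, `g ≠ ±g*`. -/
def IsType2Pol (f : k[X]) : Prop :=
  ∃ s : Multiset k[X],
    (∀ g ∈ s, g.Monic ∧ Irreducible g ∧ g ≠ starPoly g ∧ g ≠ -starPoly g) ∧
    f = (s.map fun g => g * starPoly g).prod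

/-- A monic polynomial is hyperbolic if it is of the form `G·G*`; equivalently, all its
components of type 0 and 1 occur with an even exponent. -/
def IsHyperbolicPoly (f : k[X]) : Prop := ∃ g : k[X], g.Monic ∧ f = g * starPoly g

/-- Data describing a self-dual torsion `k[X]`-module which is finite dimensional over `k`:
the direct sum, over `i`, of `[k[X]/(f i ^ e i)]^(n i)`, where each `f i` is monic
irreducible, and where the collection is self-dual (stable under `f ↦ f*`). -/
structure ModuleData (k : Type) [Field k] where
  ι : Type
  [fin : Fintype ι]
  f : ι → k[X]
  e : ι → ℕ
  n : ι → ℕ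
  monic : ∀ i, (f i).Monic
  irr : ∀ i, Irreducible (f i)
  epos : ∀ i, 0 < e i
  npos : ∀ i, 0 < n i
  selfdual : ∃ σ : Equiv.Perm ι,
    ∀ i, f (σ i) = starPoly (f i) ∧ e (σ i) = e i ∧ n (σ i) = n i

attribute [instance] ModuleData.fin

namespace ModuleData

variable (D : ModuleData k)

/-- The underlying `K[X]`-module of `M ⊗_k K`, realised concretely, for an extension
`ι : k →+* K`. -/
abbrev SpaceVia {K : Type} [Field K] (ι : k →+* K) : Type :=
  (i : D.ι) → Fin (D.n i) →
    (Polynomial K ⧸ Ideal.span {((D.f i).map ι) ^ D.e i})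

/-- The dimension of `M` as a `k`-vector space. -/
def dim : ℕ := ∑ i, D.n i * (D.e i * (D.f i).natDegree)

/-- The characteristic polynomial `F_M` of `M`. -/
def charPoly : k[X] := ∏ i, D.f i ^ (D.n i * D.e i)

/-- The summand `i` is of type 0 : `f i` is `X - 1` or `X + 1`. -/
def IsIdx0 (i : D.ι) : Prop := D.f i = X - 1 ∨ D.f i = X + 1

/-- The summand `i` is of type 1 : `f i` is symmetric of even degree. -/
def IsIdx1 (i : D.ι) : Prop := D.f i = (D.f i).reverse ∧ Even (D.f i).natDegree

/-- The summand `i` is of type 2 : `f i` is not self-dual. -/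
def IsIdx2 (i : D.ι) : Prop := D.f i ≠ starPoly (D.f i)

open Classical in
/-- `dim_k M⁰`. -/
def dim0 : ℕ := ∑ i, if D.IsIdx0 i then D.n i * (D.e i * (D.f i).natDegree) else 0

open Classical in
/-- `dim_k M¹`. -/
def dim1 : ℕ := ∑ i, if D.IsIdx1 i then D.n i * (D.e i * (D.f i).natDegree) else 0

open Classical in
/-- `dim_k M²`. -/
def dim2 : ℕ := ∑ i, if D.IsIdx2 i then D.n i * (D.e i * (D.f i).natDegree) else 0

/-- `M` is semi-simple : all exponents are 1. -/
def Semisimple : Prop := ∀ i, D.e i = 1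

/-- `M̄_odd` : the direct sum of the summands `[k[X]/(f)]^n`, over those summands
`[k[X]/(f^e)]^n` of `M` with `e` odd and `f` self-dual (`f = f*`). -/
def oddBar : ModuleData k where
  ι := {i : D.ι // Odd (D.e i) ∧ D.f i = starPoly (D.f i)}
  fin := by classical exact inferInstance
  f i := D.f i.1
  e _ := 1
  n i := D.n i.1
  monic i := D.monic i.1
  irr i := D.irr i.1
  epos _ := one_pos
  npos i := D.npos i.1
  selfdual := ⟨Equiv.refl _, fun i => ⟨i.2.2, rfl, rfl⟩⟩

end ModuleData

theorem starPoly_eq_self_of_symm {f : k[X]} (hm : f.Monic) (hs : f = f.reverse) :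
    starPoly f = f := by
  have h0 : f.coeff 0 = 1 := by
    conv_lhs => rw [hs]
    rw [Polynomial.coeff_zero_reverse]
    exact hm
  rw [starPoly, h0, inv_one, map_one, one_mul, ← hs]

/-- The module `[k[X]/(f)]^m` for a monic symmetric irreducible `f`. -/
def ModuleData.single (f : k[X]) (hmon : f.Monic) (hirr : Irreducible f)
    (hsym : f = f.reverse) (m : ℕ) (hm : 0 < m) : ModuleData k where
  ι := Unit
  fin := inferInstance
  f _ := f
  e _ := 1
  n _ := m
  monic _ := hmon
  irr _ := hirr
  epos _ := one_pos
  npos _ := hm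
  selfdual := ⟨Equiv.refl _, fun _ => ⟨(starPoly_eq_self_of_symm hmon hsym).symm, rfl, rfl⟩⟩

section Bilin

variable {V : Type} [AddCommGroup V] [Module k V]

/-- `t` is an isometry of the bilinear space `(V, B)`. -/
def IsIsometryOf (B : LinearMap.BilinForm k V) (t : V ≃ₗ[k] V) : Prop :=
  ∀ x y, B (t x) (t y) = B x y

/-- `(V, B)` is a quadratic space : `B` is a symmetric bilinear form of non-zero
determinant (equivalently, non-degenerate). -/
def IsQuadraticSpace (B : LinearMap.BilinForm k V) : Prop :=
  (∀ x y, B x y = B y x) ∧ (∀ x, (∀ y, B x y = 0) → x = 0)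

/-- The bilinear space `(W, B)` over an extension `ι : k →+* K` has an isometry whose
associated `K[X]`-module is `M ⊗_k K`. -/
def HasIsometryWithModuleVia {K : Type} [Field K] (ι : k →+* K)
    {W : Type} [AddCommGroup W] [Module K W]
    (B : LinearMap.BilinForm K W) (D : ModuleData k) : Prop :=
  ∃ t : W ≃ₗ[K] W, IsIsometryOf B t ∧
    ∃ φ : W ≃ₗ[K] D.SpaceVia ι, ∀ w, φ (t w) = (X : Polynomial K) • φ w

/-- `(V, B)` has an isometry with module `M`. -/
def HasIsometryWithModule (B : LinearMap.BilinForm k V) (D : ModuleData k) : Prop :=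
  HasIsometryWithModuleVia (RingHom.id k) B D

/-- The bilinear space `(W, B)` over an extension `ι : k →+* K` has an isometry with
minimal polynomial (the image of) `f`. -/
def HasIsometryWithMinpolyVia {K : Type} [Field K] (ι : k →+* K)
    {W : Type} [AddCommGroup W] [Module K W]
    (B : LinearMap.BilinForm K W) (f : k[X]) : Prop :=
  ∃ t : W ≃ₗ[K] W, IsIsometryOf B t ∧ minpoly K t.toLinearMap = f.map ι

/-- `(V, B)` has an isometry with minimal polynomial `f`. -/
def HasIsometryWithMinpoly (B : LinearMap.BilinForm k V) (f : k[X]) : Prop :=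
  ∃ t : V ≃ₗ[k] V, IsIsometryOf B t ∧ minpoly k t.toLinearMap = f

/-- A (2n)-dimensional quadratic space is hyperbolic if it has a self-orthogonal subspace
of dimension n. -/
def IsHyperbolicSpace (B : LinearMap.BilinForm k V) : Prop :=
  ∃ W : Submodule k V, (∀ x ∈ W, ∀ y ∈ W, B x y = 0) ∧
    2 * Module.finrank k W = Module.finrank k V

/-- The Witt index : the largest dimension of a totally isotropic subspace. -/
def wittIndex (B : LinearMap.BilinForm k V) : ℕ :=
  sSup {m | ∃ W : Submodule k V, (∀ x ∈ W, ∀ y ∈ W, B x y = 0) ∧ Module.finrank k W = m}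

variable [FiniteDimensional k V]

/-- The Gram matrix of `B` with respect to a fixed basis. -/
def gramOf (B : LinearMap.BilinForm k V) :
    Matrix (Fin (Module.finrank k V)) (Fin (Module.finrank k V)) k :=
  LinearMap.toMatrix₂ (Module.finBasis k V) (Module.finBasis k V) B

/-- The determinant of `B` (well defined modulo nonzero squares). -/
def detOf (B : LinearMap.BilinForm k V) : k := (gramOf B).det

end Bilin

namespace Polynomial

section

variable (R : Type*) [Semiring R] [NoZeroDivisors R]

def mirrorMulEquiv : R[X] ≃* R[X] where
  toFun := mirror
  invFun := mirror
  left_inv := mirror_involutive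
  right_inv := mirror_involutive
  map_mul' p q := mirror_mul_of_domain p q

variable {R}

@[simp]
theorem irreducible_mirror {p : R[X]} : Irreducible p.mirror ↔ Irreducible p :=
  MulEquiv.irreducible_iff (x := p) (mirrorMulEquiv R)

end

section

variable {R : Type*} [CommSemiring R]

theorem eval_reverse_mul_pow_of_mul_self_eq_one {x : R} (hx : x * x = 1) (f : R[X]) :
    f.reverse.eval x * x ^ f.natDegree = f.eval x := by
  let _ : Invertible x := ⟨x, hx, hx⟩
  exact eval₂_reverse_mul_pow (RingHom.id R) x f

end

section

variable {R : Type*} [CommRing R] [IsDomain R]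

theorem isRoot_of_reverse_eq_C_mul (hchar : (2 : R) ≠ 0) {f : R[X]} {c x : R} (hx : x * x = 1)
    (hrev : f.reverse = C c * f) (hcx : c * x ^ f.natDegree = -1) : f.IsRoot x := by
  have h := eval_reverse_mul_pow_of_mul_self_eq_one hx f
  rw [hrev, eval_mul, eval_C] at h
  have h2 : 2 * f.eval x = 0 := by linear_combination f.eval x * hcx - h
  exact (mul_eq_zero.1 h2).resolve_left hchar

theorem Monic.eq_X_sub_C_of_irreducible_of_isRoot {f : R[X]} (hf : f.Monic)
    (hirr : Irreducible f) {a : R} (ha : f.IsRoot a) : f = X - C a :=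
  (eq_of_monic_of_associated (monic_X_sub_C a) hf
    ((irreducible_X_sub_C a).associated_of_dvd hirr (dvd_iff_isRoot.2 ha))).symm

end

end Polynomial

theorem starPoly_eq_C_mul_mirror {f : k[X]} (h0 : f.coeff 0 ≠ 0) :
    starPoly f = C (f.coeff 0)⁻¹ * f.mirror := by
  rw [starPoly, mirror, natTrailingDegree_eq_zero.2 (Or.inr h0), pow_zero, mul_one]

theorem starPoly_mul (f g : k[X]) : starPoly (f * g) = starPoly f * starPoly g := by
  simp only [starPoly, reverse_mul_of_domain, mul_coeff_zero, mul_inv, map_mul]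
  ring

theorem coeff_zero_starPoly {f : k[X]} (hf : f.Monic) :
    (starPoly f).coeff 0 = (f.coeff 0)⁻¹ := by
  rw [starPoly, mul_coeff_zero, coeff_C_zero, coeff_zero_reverse, hf.leadingCoeff, mul_one]

theorem coeff_zero_ne_zero_of_starPoly_eq_self {f : k[X]} (hf : f ≠ 0) (h : starPoly f = f) :
    f.coeff 0 ≠ 0 := by
  intro h0
  rw [starPoly, h0, inv_zero, C_0, zero_mul] at h
  exact hf h.symm

theorem monic_starPoly {f : k[X]} (h0 : f.coeff 0 ≠ 0) : (starPoly f).Monic := by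
  rw [Monic, starPoly_eq_C_mul_mirror h0, leadingCoeff_mul, leadingCoeff_C, mirror_leadingCoeff,
    trailingCoeff_eq_coeff_zero h0, inv_mul_cancel₀ h0]

theorem starPoly_starPoly {f : k[X]} (hf : f.Monic) (h0 : f.coeff 0 ≠ 0) :
    starPoly (starPoly f) = f := by
  have h0' : (starPoly f).coeff 0 ≠ 0 := by
    rw [coeff_zero_starPoly hf]
    exact inv_ne_zero h0
  rw [starPoly_eq_C_mul_mirror h0', coeff_zero_starPoly hf, inv_inv, starPoly_eq_C_mul_mirror h0,
    mirror_mul_of_domain, mirror_C, mirror_mirror, ← mul_assoc, ← C_mul, mul_inv_cancel₀ h0,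
    C_1, one_mul]

theorem irreducible_starPoly {f : k[X]} (hf : Irreducible f) (h0 : f.coeff 0 ≠ 0) :
    Irreducible (starPoly f) := by
  rw [starPoly_eq_C_mul_mirror h0]
  exact (associated_unit_mul_left _ _ (isUnit_C.2 (inv_ne_zero h0).isUnit)).symm.irreducible
    (irreducible_mirror.2 hf)

theorem starPoly_eq_self_of_eq_C_mul_reverse {F : k[X]} (hF : F.Monic) {ε : k}
    (h : F = C ε * F.reverse) : starPoly F = F := by
  have hε : F.coeff 0 = ε := by
    conv_lhs => rw [h]
    rw [mul_coeff_zero, coeff_C_zero, coeff_zero_reverse, hF.leadingCoeff, mul_one]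
  have hε0 : ε ≠ 0 := by
    rintro rfl
    rw [C_0, zero_mul] at h
    exact hF.ne_zero h
  have hεε : ε * ε = 1 := by
    have hlead := congrArg leadingCoeff h
    rwa [hF.leadingCoeff, leadingCoeff_mul, leadingCoeff_C, reverse_leadingCoeff,
      trailingCoeff_eq_coeff_zero (hε ▸ hε0), hε, eq_comm] at hlead
  rw [starPoly, hε, inv_eq_of_mul_eq_one_right hεε, ← h]

theorem isType0Pol_or_isType1Pol_of_starPoly_eq_self (hchar : (2 : k) ≠ 0) {g : k[X]}
    (hg : g.Monic) (hirr : Irreducible g) (hsd : starPoly g = g) :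
    IsType0Pol g ∨ IsType1Pol g := by
  have h0 := coeff_zero_ne_zero_of_starPoly_eq_self hg.ne_zero hsd
  have hinv : (g.coeff 0)⁻¹ = g.coeff 0 := by rw [← coeff_zero_starPoly hg, hsd]
  have hrev : g.reverse = C (g.coeff 0) * g := calc
    g.reverse = C (g.coeff 0) * starPoly g := by
      rw [starPoly, ← mul_assoc, ← C_mul, mul_inv_cancel₀ h0, C_1, one_mul]
    _ = C (g.coeff 0) * g := by rw [hsd]
  rcases mul_self_eq_one_iff.1 (hinv ▸ mul_inv_cancel₀ h0) with h1 | h1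
  · rcases Nat.even_or_odd g.natDegree with heven | hodd
    · right
      refine ⟨{g}, ?_, (Multiset.prod_singleton g).symm⟩
      intro f hf
      rw [Multiset.mem_singleton] at hf
      subst hf
      rw [hrev, h1, C_1, one_mul]
      exact ⟨hg, hirr, rfl, heven⟩
    · left
      have hroot := isRoot_of_reverse_eq_C_mul hchar (x := -1) (by norm_num) hrev
        (by rw [h1, hodd.neg_one_pow, one_mul])
      refine ⟨0, 1, ?_⟩
      rw [hg.eq_X_sub_C_of_irreducible_of_isRoot hirr hroot]
      simp
  · left
    have hroot := isRoot_of_reverse_eq_C_mul hchar (mul_one 1) hrev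
      (by rw [h1, one_pow, mul_one])
    refine ⟨1, 0, ?_⟩
    rw [hg.eq_X_sub_C_of_irreducible_of_isRoot hirr hroot]
    simp

theorem isType2Pol_mul_starPoly (hchar : (2 : k) ≠ 0) {g : k[X]} (hg : g.Monic)
    (hirr : Irreducible g) (h0 : g.coeff 0 ≠ 0) (hne : g ≠ starPoly g) :
    IsType2Pol (g * starPoly g) := by
  refine ⟨{g}, ?_, by simp⟩
  intro f hf
  rw [Multiset.mem_singleton] at hf
  subst hf
  refine ⟨hg, hirr, hne, fun h => hchar ?_⟩
  have hlead := congrArg leadingCoeff h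
  rw [hg.leadingCoeff, leadingCoeff_neg, (monic_starPoly h0).leadingCoeff] at hlead
  linear_combination hlead

theorem exists_type012_factor_of_starPoly_eq_self (hchar : (2 : k) ≠ 0) {F : k[X]}
    (hF : F.Monic) (hsd : starPoly F = F) (hdeg : 0 < F.natDegree) :
    ∃ G H : k[X], G.Monic ∧ (IsType0Pol G ∨ IsType1Pol G ∨ IsType2Pol G) ∧
      starPoly G = G ∧ 0 < G.natDegree ∧ F = G * H := by
  obtain ⟨g, hg, hirr, q, rfl⟩ :=
    exists_monic_irreducible_factor F (not_isUnit_of_natDegree_pos F hdeg)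
  have h0 : g.coeff 0 ≠ 0 := left_ne_zero_of_mul
    (mul_coeff_zero g q ▸ coeff_zero_ne_zero_of_starPoly_eq_self hF.ne_zero hsd)
  by_cases hgg : starPoly g = g
  · have htype := isType0Pol_or_isType1Pol_of_starPoly_eq_self hchar hg hirr hgg
    exact ⟨g, q, hg, htype.imp_right Or.inl, hgg, hirr.natDegree_pos, rfl⟩
  have hg' : (starPoly g).Monic := monic_starPoly h0
  have hdvd : starPoly g ∣ g * q := ⟨starPoly q, by rw [← starPoly_mul, hsd]⟩
  have hcop : IsCoprime g (starPoly g) := hirr.coprime_iff_not_dvd.2 fun h => hgg <|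
    (eq_of_monic_of_associated hg hg' <|
      hirr.associated_of_dvd (irreducible_starPoly hirr h0) h).symm
  obtain ⟨H, hH⟩ := hcop.mul_dvd (dvd_mul_right g q) hdvd
  refine ⟨g * starPoly g, H, hg.mul hg', Or.inr (Or.inr ?_), ?_, ?_, hH⟩
  · exact isType2Pol_mul_starPoly hchar hg hirr h0 (Ne.symm hgg)
  · rw [starPoly_mul, starPoly_starPoly hg h0, mul_comm]
  · rw [hg.natDegree_mul hg']
    exact Nat.add_pos_left hirr.natDegree_pos _

theorem exists_type012_factorization_of_starPoly_eq_self (hchar : (2 : k) ≠ 0) {F : k[X]}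
    (hF : F.Monic) (hsd : starPoly F = F) :
    ∃ s : Multiset k[X],
      (∀ g ∈ s, g.Monic ∧ (IsType0Pol g ∨ IsType1Pol g ∨ IsType2Pol g)) ∧ F = s.prod := by
  induction hn : F.natDegree using Nat.strong_induction_on generalizing F with
  | _ n ih =>
  rcases Nat.eq_zero_or_pos n with rfl | hpos
  · exact ⟨0, by simp, by rw [Multiset.prod_zero, ← hF.natDegree_eq_zero.1 hn]⟩
  obtain ⟨G, H, hG, htype, hGsd, hGdeg, rfl⟩ :=
    exists_type012_factor_of_starPoly_eq_self hchar hF hsd (hn ▸ hpos)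
  have hH : H.Monic := hG.of_mul_monic_left hF
  have hHsd : starPoly H = H :=
    mul_left_cancel₀ hG.ne_zero (by rw [← hsd, starPoly_mul, hGsd])
  obtain ⟨s, hs, rfl⟩ :=
    ih H.natDegree (by rw [← hn, hG.natDegree_mul hH]; omega) hH hHsd rfl
  exact ⟨G ::ₘ s, Multiset.forall_mem_cons.2 ⟨⟨hG, htype⟩, hs⟩, (Multiset.prod_cons G s).symm⟩

theorem monic_epsSymmetric_prod_type012_general
    (hchar : (2 : k) ≠ 0)
    (F : k[X]) (hF : F.Monic) (ε : k)
    (hsymm : F = Polynomial.C ε * F.reverse) :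
    ∃ s : Multiset k[X],
      (∀ g ∈ s, g.Monic ∧ (IsType0Pol g ∨ IsType1Pol g ∨ IsType2Pol g)) ∧ F = s.prod :=
  exists_type012_factorization_of_starPoly_eq_self hchar hF
    (starPoly_eq_self_of_eq_C_mul_reverse hF hsymm)

/-- Every monic `ε`-symmetric polynomial is a product of monic
polynomials of type 0, of type 1 and of type 2. -/
theorem monic_epsSymmetric_prod_type012
    (hchar : (2 : k) ≠ 0)
    (F : k[X]) (hF : F.Monic) (ε : k) (hε : ε = 1 ∨ ε = -1)
    (hsymm : F = Polynomial.C ε * F.reverse) :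
    ∃ s : Multiset k[X],
      (∀ g ∈ s, g.Monic ∧ (IsType0Pol g ∨ IsType1Pol g ∨ IsType2Pol g)) ∧ F = s.prod :=
  monic_epsSymmetric_prod_type012_general hchar F hF ε hsymm

end
end

section
/- Let (V,q) be a quadratic space over a field k of characteristic ≠ 2, let t be an isometry of (V,q) and let F ∈ k[X] be the characteristic polynomial of t. If F(1)·F(−1) ≠ 0, then det(q) = F(1)·F(−1) in k*/k*², i.e. det(q)·F(1)·F(−1) is a non-zero square in k. -/
open Polynomial

noncomputable section

variable {k : Type} [Field k]

/-! Let `G` be the Gram matrix of `B` and `T` the matrix of `t`, so that `Tᵀ G T = G`. The matrix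
`H = G T - Tᵀ G` is skew-symmetric and `H T = G (T² - 1)`. Since `-1` is not an eigenvalue of `t`,
comparing determinants in `(-1 - T)ᵀ G T = G (-1 - T)` gives `det T = 1`, hence
`det H = det G · det (T² - 1) = det G · F(1) F(-1)`. A skew-symmetric determinant is a square
(split off a `2 × 2` block `!![0, a; -a, 0]` and induct on the Schur complement), and
`F(1) F(-1) ≠ 0` lets one divide. -/

namespace Matrix

theorem diag_eq_zero_of_transpose_eq_neg {n R : Type*} [Ring R] [NoZeroDivisors R]
    (h2 : (2 : R) ≠ 0) {A : Matrix n n R} (hA : Aᵀ = -A) (i : n) : A i i = 0 := by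
  have h := congr_fun₂ hA i i
  rw [transpose_apply, neg_apply, eq_neg_iff_add_eq_zero, ← two_mul] at h
  exact (mul_eq_zero.1 h).resolve_left h2

theorem transpose_schur_eq_neg {m n R : Type*} [Fintype m] [Fintype n] [DecidableEq m]
    [CommRing R] {M : Matrix (m ⊕ n) (m ⊕ n) R} (hM : Mᵀ = -M) [Invertible M.toBlocks₁₁] :
    (M.toBlocks₂₂ - M.toBlocks₂₁ * ⅟M.toBlocks₁₁ * M.toBlocks₁₂)ᵀ =
      -(M.toBlocks₂₂ - M.toBlocks₂₁ * ⅟M.toBlocks₁₁ * M.toBlocks₁₂) := by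
  have h₁₁ : M.toBlocks₁₁ᵀ = -M.toBlocks₁₁ := by ext i j; exact congr_fun₂ hM (.inl i) (.inl j)
  have h₁₂ : M.toBlocks₁₂ᵀ = -M.toBlocks₂₁ := by ext i j; exact congr_fun₂ hM (.inr i) (.inl j)
  have h₂₁ : M.toBlocks₂₁ᵀ = -M.toBlocks₁₂ := by ext i j; exact congr_fun₂ hM (.inl i) (.inr j)
  have h₂₂ : M.toBlocks₂₂ᵀ = -M.toBlocks₂₂ := by ext i j; exact congr_fun₂ hM (.inr i) (.inr j)
  have hinv : (⅟M.toBlocks₁₁)ᵀ = -⅟M.toBlocks₁₁ := by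
    refine (neg_eq_iff_eq_neg.1 (invOf_eq_left_inv ?_).symm)
    rw [neg_mul, ← mul_neg, ← h₁₁, ← transpose_mul, mul_invOf_self, transpose_one]
  rw [transpose_sub, transpose_mul, transpose_mul, h₁₂, h₂₁, h₂₂, hinv]
  simp only [Matrix.neg_mul, Matrix.mul_neg, neg_neg, neg_sub, Matrix.mul_assoc]
  abel

variable {K : Type*} [Field K]

theorem isSquare_det_of_transpose_eq_neg (h2 : (2 : K) ≠ 0) :
    ∀ {n : ℕ} {A : Matrix (Fin n) (Fin n) K}, Aᵀ = -A → IsSquare A.det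
  | 0, _, _ => ⟨1, by simp⟩
  | 1, _, hA => ⟨0, by simp [diag_eq_zero_of_transpose_eq_neg h2 hA]⟩
  | m + 2, A, hA => by
    by_cases hrow : ∀ j, A 0 j = 0
    · exact ⟨0, by rw [det_eq_zero_of_row_eq_zero 0 hrow, mul_zero]⟩
    push Not at hrow
    obtain ⟨j, hj⟩ := hrow
    have hj0 : j ≠ 0 := by
      rintro rfl
      exact hj (diag_eq_zero_of_transpose_eq_neg h2 hA 0)
    -- reorder the indices so that the `2 × 2` block in the corner is `!![0, a; -a, 0]`, `a ≠ 0`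
    let e : Fin 2 ⊕ Fin m ≃ Fin (m + 2) :=
      (finSumFinEquiv.trans (finCongr (add_comm 2 m))).trans (Equiv.swap 1 j)
    have he0 : e (.inl 0) = 0 := Equiv.swap_apply_of_ne_of_ne zero_ne_one hj0.symm
    have he1 : e (.inl 1) = j := Equiv.swap_apply_left 1 j
    set M := A.submatrix e e with hMdef
    have hM : Mᵀ = -M := by rw [transpose_submatrix, hA]; rfl
    have hP : M.toBlocks₁₁.det = A 0 j * A 0 j := by
      have h10 : M (.inl 1) (.inl 0) = -M (.inl 0) (.inl 1) := congr_fun₂ hM (.inl 0) (.inl 1)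
      have h01 : M (.inl 0) (.inl 1) = A 0 j := by rw [hMdef, submatrix_apply, he0, he1]
      rw [det_fin_two]
      simp only [toBlocks₁₁, of_apply, diag_eq_zero_of_transpose_eq_neg h2 hM, h10, h01]
      ring
    have : Invertible M.toBlocks₁₁ :=
      invertibleOfIsUnitDet _ (hP ▸ (mul_ne_zero hj hj).isUnit)
    obtain ⟨c, hc⟩ := isSquare_det_of_transpose_eq_neg h2 (transpose_schur_eq_neg hM)
    refine ⟨A 0 j * c, ?_⟩
    rw [← det_submatrix_equiv_self e A, ← hMdef, ← fromBlocks_toBlocks M, det_fromBlocks₁₁, hP, hc]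
    ring

theorem det_mul_self_sub_one {n R : Type*} [Fintype n] [DecidableEq n] [CommRing R]
    (T : Matrix n n R) : (T * T - 1).det = T.charpoly.eval 1 * T.charpoly.eval (-1) := by
  rw [eval_charpoly, eval_charpoly, ← det_mul, map_neg, map_one]
  congr 1
  noncomm_ring

theorem det_eq_one_of_transpose_mul_mul_eq {n : Type*} [Fintype n] [DecidableEq n]
    {G T : Matrix n n K} (hGT : Tᵀ * G * T = G) (hG : G.det ≠ 0)
    (hT : T.charpoly.eval (-1) ≠ 0) : T.det = 1 := by
  rw [eval_charpoly, map_neg, map_one] at hT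
  have key : (-1 - T)ᵀ * G * T = G * (-1 - T) := by
    rw [transpose_sub, transpose_neg, transpose_one, Matrix.sub_mul, Matrix.sub_mul, hGT,
      Matrix.mul_sub]
    simp only [Matrix.neg_mul, Matrix.one_mul, Matrix.mul_neg, Matrix.mul_one]
    abel
  have hdet := congrArg det key
  rw [det_mul, det_mul, det_mul, det_transpose] at hdet
  exact mul_left_cancel₀ (mul_ne_zero hT hG) (by rw [mul_one, hdet, mul_comm])

theorem isSquare_det_mul_charpoly_eval (h2 : (2 : K) ≠ 0) {n : ℕ}
    {G T : Matrix (Fin n) (Fin n) K} (hG : Gᵀ = G) (hGT : Tᵀ * G * T = G) (hdet : G.det ≠ 0)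
    (hT : T.charpoly.eval (-1) ≠ 0) :
    IsSquare (G.det * (T.charpoly.eval 1 * T.charpoly.eval (-1))) := by
  set H := G * T - Tᵀ * G
  have hH : Hᵀ = -H := by
    rw [transpose_sub, transpose_mul, transpose_mul, transpose_transpose, hG, neg_sub]
  have hHT : H * T = G * (T * T - 1) := by
    rw [Matrix.sub_mul, hGT, Matrix.mul_sub, Matrix.mul_one, Matrix.mul_assoc]
  have hdetH := congrArg det hHT
  rw [det_mul, det_mul, det_eq_one_of_transpose_mul_mul_eq hGT hdet hT, mul_one,
    det_mul_self_sub_one] at hdetH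
  exact hdetH ▸ isSquare_det_of_transpose_eq_neg h2 hH

end Matrix

open scoped Matrix

section Bilin

variable {V : Type} [AddCommGroup V] [Module k V] [FiniteDimensional k V]
  {B : LinearMap.BilinForm k V}

theorem IsIsometryOf.transpose_mul_gramOf_mul {t : V ≃ₗ[k] V} (ht : IsIsometryOf B t) :
    (LinearMap.toMatrix (Module.finBasis k V) (Module.finBasis k V) t.toLinearMap)ᵀ * gramOf B *
      LinearMap.toMatrix (Module.finBasis k V) (Module.finBasis k V) t.toLinearMap = gramOf B := by
  rw [gramOf, ← LinearMap.toMatrix₂_compl₁₂]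
  congr 1
  ext x y
  exact ht x y

theorem IsQuadraticSpace.transpose_gramOf (hq : IsQuadraticSpace B) : (gramOf B)ᵀ = gramOf B := by
  ext i j
  exact hq.1 _ _

theorem IsQuadraticSpace.detOf_ne_zero (hq : IsQuadraticSpace B) : detOf B ≠ 0 :=
  (LinearMap.separatingLeft_iff_det_ne_zero _).1 hq.2

end Bilin

/-- **Cor. 5.2.** If `t` is an isometry of a quadratic space `q` with
characteristic polynomial `F` and `F(1)·F(−1) ≠ 0`, then `det(q) = F(1)·F(−1)` in
`k*/k*²`. -/
theorem det_eq_charpoly_eval_of_ne_zero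
    (hchar : (2 : k) ≠ 0)
    {V : Type} [AddCommGroup V] [Module k V] [FiniteDimensional k V]
    (B : LinearMap.BilinForm k V) (hq : IsQuadraticSpace B)
    (t : V ≃ₗ[k] V) (ht : IsIsometryOf B t)
    (hF : (LinearMap.charpoly t.toLinearMap).eval 1 *
        (LinearMap.charpoly t.toLinearMap).eval (-1) ≠ 0) :
    ∃ c : k, c ≠ 0 ∧ detOf B =
      ((LinearMap.charpoly t.toLinearMap).eval 1 *
        (LinearMap.charpoly t.toLinearMap).eval (-1)) * c ^ 2 := by
  rw [← LinearMap.charpoly_toMatrix t.toLinearMap (Module.finBasis k V)] at hF ⊢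
  obtain ⟨c, hc⟩ := Matrix.isSquare_det_mul_charpoly_eval hchar hq.transpose_gramOf
    ht.transpose_mul_gramOf_mul hq.detOf_ne_zero (right_ne_zero_of_mul hF)
  have hc0 : c ≠ 0 := by
    rintro rfl
    exact mul_ne_zero hq.detOf_ne_zero hF (hc.trans (zero_mul 0))
  refine ⟨c / _, div_ne_zero hc0 hF, ?_⟩
  field_simp
  rw [eq_div_iff hF]
  exact hc.trans (sq c).symm
end
end
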